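/- Let F(m,n) = ((m+n-1)^2 - (m+n-1) % 2)/4 + min(m,n) on positive integers. For each positive integer C, there exists a unique pair of positive integers (m,n) with m ≥ n and F(m,n) = C. -/
import Mathlib


def F (m n : ℕ) : ℕ := ((m + n - 1)^2 - (m + n - 1) % 2) / 4 + min m n

def g (s : ℕ) : ℕ := (s^2 - s % 2) / 4

lemma g_succ (s : ℕ) : g (s+1) = g s + (s+1)/2 := by
  unfold g
  rcases Nat.even_or_odd s with ⟨k, rfl⟩ | ⟨k, rfl⟩
  · obtain ⟨t, e1, e2⟩ : ∃ t, (k+k+1)^2 = 4*t+4*k+1 ∧ (k+k)^2 = 4*t :=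
      ⟨k*k, by ring, by ring⟩
    rw [e1, e2]; omega
  · obtain ⟨t, e1, e2⟩ : ∃ t, (2*k+1+1)^2 = 4*t+8*k+4 ∧ (2*k+1)^2 = 4*t+4*k+1 :=
      ⟨k*k, by ring, by ring⟩
    rw [e1, e2]; omega

lemma g_mono : Monotone g := by
  apply monotone_nat_of_le_succ
  intro s; rw [g_succ]; omega

lemma Fval (m n : ℕ) (h : n ≤ m) : F m n = g (m+n-1) + n := by
  unfold F g; rw [min_eq_right h]

lemma F_lb (m n : ℕ) (h1 : 1 ≤ n) (h2 : n ≤ m) : g (m+n-1) < F m n := by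
  rw [Fval m n h2]; omega

lemma F_ub (m n : ℕ) (h1 : 1 ≤ n) (h2 : n ≤ m) : F m n ≤ g (m+n) := by
  rw [Fval m n h2]
  have h4 := g_succ (m+n-1)
  have e : m+n-1+1 = m+n := by omega
  rw [e] at h4
  omega

lemma exists_pair (C : ℕ) (hC : 1 ≤ C) : ∃ m n, 1 ≤ n ∧ n ≤ m ∧ F m n = C := by
  induction C with
  | zero => omega
  | succ C ih =>
    by_cases hC0 : C = 0
    · subst hC0
      exact ⟨1, 1, le_refl 1, le_refl 1, by decide⟩
    · obtain ⟨m, n, h1, h2, h3⟩ := ih (by omega)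
      by_cases hmn : n + 2 ≤ m
      · refine ⟨m-1, n+1, by omega, by omega, ?_⟩
        rw [Fval _ _ (by omega)]
        have e : m-1+(n+1)-1 = m+n-1 := by omega
        rw [e]
        rw [Fval m n h2] at h3
        omega
      · refine ⟨m+n, 1, le_refl 1, by omega, ?_⟩
        rw [Fval _ _ (by omega)]
        have e : m+n+1-1 = (m+n-1)+1 := by omega
        rw [e, g_succ]
        have e2 : (m+n-1+1)/2 = n := by omega
        rw [e2]
        rw [Fval m n h2] at h3
        omega

lemma s_eq (m n m' n' : ℕ) (h1 : 1 ≤ n) (h2 : n ≤ m) (h1' : 1 ≤ n') (h2' : n' ≤ m')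
    (hF : F m n = F m' n') : m + n = m' + n' := by
  by_contra hne
  rcases Nat.lt_or_ge (m+n) (m'+n') with h | h
  · have hA : F m n ≤ g (m+n) := F_ub m n h1 h2
    have hB : g (m'+n'-1) < F m' n' := F_lb m' n' h1' h2'
    have hle : g (m+n) ≤ g (m'+n'-1) := g_mono (by omega)
    omega
  · have h' : m'+n' < m+n := by omega
    have hA : F m' n' ≤ g (m'+n') := F_ub m' n' h1' h2'
    have hB : g (m+n-1) < F m n := F_lb m n h1 h2
    have hle : g (m'+n') ≤ g (m+n-1) := g_mono (by omega)
    omega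

theorem exists_unique_pair (C : ℕ) (hC : 1 ≤ C) :
    ∃! p : ℕ × ℕ, 1 ≤ p.2 ∧ p.2 ≤ p.1 ∧ F p.1 p.2 = C := by
  obtain ⟨m, n, h1, h2, h3⟩ := exists_pair C hC
  refine ⟨(m, n), ⟨h1, h2, h3⟩, ?_⟩
  rintro ⟨m', n'⟩ ⟨h1', h2', h3'⟩
  simp only at h1' h2' h3' ⊢
  have hFF : F m' n' = F m n := by rw [h3, h3']
  have hs : m' + n' = m + n := s_eq m' n' m n h1' h2' h1 h2 hFF
  rw [Fval m' n' h2', Fval m n h2] at hFF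
  rw [hs] at hFF
  have hn : n' = n := by omega
  have hm : m' = m := by omega
  simp [hn, hm]
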